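/- For every integer N > 2 there exist signals x and y with support {0,…,N-1}, both having all components real and non-negative (hence identical zero phases arg x[n] = arg y[n] = 0 on their support), with |𝓕x(ω)| = |𝓕y(ω)| for all ω ∈ ℝ, but y ≠ x. Explicitly one may take 𝓕x(ω) = c_x (e^{-iω} + 2)(e^{-iω} + 3)(e^{-iω} + 1)^{N-3} and 𝓕y(ω) = c_y (e^{-iω} + 1/2)(e^{-iω} + 3)(e^{-iω} + 1)^{N-3} with c_x, c_y > 0 chosen so that the intensities agree. -/

import Mathlib

/-!
Take `x` and `y` to be the coefficient sequences of
`p = (X + 2)(X + 3)(X + 1)^(N-3)` and `q = (2X + 1)(X + 3)(X + 1)^(N-3)`, so that their Fourier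
transforms are `p` and `q` evaluated at `z = e^{-iω}`. Both polynomials are products of factors with
nonnegative coefficients, so both signals are real and nonnegative. They differ only in the
factor `X + 2` versus `2X + 1`, whose root `-1/2` is the reflection of `-2` in the unit circle,
and on the unit circle `|z + 2| = |2z + 1|`. Their constant coefficients `6` and `3` differ.
-/

open Complex ComplexConjugate Polynomial

namespace Polynomial

variable (R : Type*) [Semiring R] [PartialOrder R] [IsOrderedRing R]

def nonnegCoeffs : Subsemiring R[X] where
  carrier := {p | ∀ n, 0 ≤ p.coeff n}
  mul_mem' {p q} hp hq n := by
    rw [coeff_mul]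
    exact Finset.sum_nonneg fun _ _ => mul_nonneg (hp _) (hq _)
  one_mem' n := by
    rw [coeff_one]
    split_ifs <;> simp
  add_mem' {p q} hp hq n := by
    rw [coeff_add]
    exact add_nonneg (hp n) (hq n)
  zero_mem' n := by simp

variable {R}

theorem C_mem_nonnegCoeffs {a : R} (ha : 0 ≤ a) : C a ∈ nonnegCoeffs R := fun n => by
  rw [coeff_C]
  split_ifs <;> simp [ha]

theorem X_mem_nonnegCoeffs : (X : R[X]) ∈ nonnegCoeffs R := fun n => by
  rw [coeff_X]
  split_ifs <;> simp

theorem X_add_C_mem_nonnegCoeffs {a : R} (ha : 0 ≤ a) : X + C a ∈ nonnegCoeffs R :=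
  add_mem X_mem_nonnegCoeffs (C_mem_nonnegCoeffs ha)

end Polynomial

def coeffSignal (p : ℝ[X]) (n : ℤ) : ℂ := if 0 ≤ n then (p.coeff n.toNat : ℂ) else 0

section coeffSignal

variable {p : ℝ[X]} {N : ℕ}

@[simp]
theorem coeffSignal_zero (p : ℝ[X]) : coeffSignal p 0 = p.coeff 0 := by
  simp [coeffSignal]

@[simp]
theorem coeffSignal_natCast (p : ℝ[X]) (n : ℕ) : coeffSignal p n = p.coeff n := by
  simp [coeffSignal]

theorem coeffSignal_eq_zero (hp : p.natDegree < N) {n : ℤ} (hn : n < 0 ∨ (N : ℤ) ≤ n) :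
    coeffSignal p n = 0 := by
  rcases hn with hn | hn
  · simp [coeffSignal, not_le.mpr hn]
  · lift n to ℕ using by omega
    rw [coeffSignal_natCast, coeff_eq_zero_of_natDegree_lt (by omega), ofReal_zero]

theorem coeffSignal_im_eq_zero_and_re_nonneg (hp : p ∈ nonnegCoeffs ℝ) (n : ℤ) :
    (coeffSignal p n).im = 0 ∧ 0 ≤ (coeffSignal p n).re := by
  unfold coeffSignal
  split_ifs
  · exact ⟨ofReal_im _, by simpa using hp n.toNat⟩
  · simp

theorem sum_coeffSignal_mul_exp (hp : p.natDegree < N) (ω : ℝ) :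
    ∑ n ∈ Finset.range N, coeffSignal p n * exp (-I * ω * n) = aeval (exp (-I * ω)) p := by
  rw [aeval_eq_sum_range' hp]
  refine Finset.sum_congr rfl fun n _ => ?_
  rw [coeffSignal_natCast, ← exp_nat_mul, Algebra.smul_def, Complex.coe_algebraMap]
  ring_nf

end coeffSignal

/-- Reflection `a ↦ 1 / conj a` in the unit circle rescales the distance to points of the circle
by `|a|`. -/
theorem Complex.norm_add_eq_norm_conj_mul_add_one {z : ℂ} (hz : ‖z‖ = 1) (a : ℂ) :
    ‖z + a‖ = ‖conj a * z + 1‖ := by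
  have hzz : conj z * z = 1 := by rw [conj_mul', hz]; simp
  calc ‖z + a‖ = ‖conj (z + a)‖ := (norm_conj _).symm
    _ = ‖conj z * (conj a * z + 1)‖ := by
      congr 1
      rw [map_add]
      linear_combination (-conj a) * hzz
    _ = ‖conj a * z + 1‖ := by rw [norm_mul, norm_conj, hz, one_mul]

theorem nonuniqueness_with_full_phase (N : ℕ) (hN : 2 < N) :
    ∃ x y : ℤ → ℂ, ∃ cx cy : ℝ, 0 < cx ∧ 0 < cy ∧
      (∀ n : ℤ, (n < 0 ∨ (N : ℤ) ≤ n) → x n = 0) ∧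
      (∀ n : ℤ, (n < 0 ∨ (N : ℤ) ≤ n) → y n = 0) ∧
      (∀ ω : ℝ,
        ∑ n ∈ Finset.range N, x n * Complex.exp (-Complex.I * (ω : ℂ) * (n : ℂ))
          = (cx : ℂ) * (Complex.exp (-Complex.I * (ω : ℂ)) + 2) *
            (Complex.exp (-Complex.I * (ω : ℂ)) + 3) *
            (Complex.exp (-Complex.I * (ω : ℂ)) + 1) ^ (N - 3)) ∧
      (∀ ω : ℝ,
        ∑ n ∈ Finset.range N, y n * Complex.exp (-Complex.I * (ω : ℂ) * (n : ℂ))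
          = (cy : ℂ) * (Complex.exp (-Complex.I * (ω : ℂ)) + 1 / 2) *
            (Complex.exp (-Complex.I * (ω : ℂ)) + 3) *
            (Complex.exp (-Complex.I * (ω : ℂ)) + 1) ^ (N - 3)) ∧
      (∀ n : ℤ, (x n).im = 0 ∧ 0 ≤ (x n).re) ∧
      (∀ n : ℤ, (y n).im = 0 ∧ 0 ≤ (y n).re) ∧
      (∀ ω : ℝ,
        ‖∑ n ∈ Finset.range N, x n * Complex.exp (-Complex.I * (ω : ℂ) * (n : ℂ))‖
          = ‖∑ n ∈ Finset.range N, y n * Complex.exp (-Complex.I * (ω : ℂ) * (n : ℂ))‖) ∧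
      y ≠ x := by
  have hp : ((X + C 2) * (X + C 3) * (X + C 1) ^ (N - 3) : ℝ[X]).natDegree < N :=
    Nat.lt_of_le_of_lt (m := N - 3 + 2) (by compute_degree!; omega) (by omega)
  have hq : ((C 2 * X + 1) * (X + C 3) * (X + C 1) ^ (N - 3) : ℝ[X]).natDegree < N :=
    Nat.lt_of_le_of_lt (m := N - 3 + 2) (by compute_degree!; omega) (by omega)
  set p : ℝ[X] := (X + C 2) * (X + C 3) * (X + C 1) ^ (N - 3)
  set q : ℝ[X] := (C 2 * X + 1) * (X + C 3) * (X + C 1) ^ (N - 3)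
  have hp_nonneg : p ∈ nonnegCoeffs ℝ :=
    mul_mem (mul_mem (X_add_C_mem_nonnegCoeffs two_pos.le) (X_add_C_mem_nonnegCoeffs (by norm_num)))
      (pow_mem (X_add_C_mem_nonnegCoeffs zero_le_one) _)
  have hq_nonneg : q ∈ nonnegCoeffs ℝ :=
    mul_mem (mul_mem (add_mem (mul_mem (C_mem_nonnegCoeffs two_pos.le) X_mem_nonnegCoeffs)
      (one_mem _)) (X_add_C_mem_nonnegCoeffs (by norm_num)))
      (pow_mem (X_add_C_mem_nonnegCoeffs zero_le_one) _)
  refine ⟨coeffSignal p, coeffSignal q, 1, 2, one_pos, two_pos, fun _ => coeffSignal_eq_zero hp,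
    fun _ => coeffSignal_eq_zero hq, fun ω => ?_, fun ω => ?_,
    coeffSignal_im_eq_zero_and_re_nonneg hp_nonneg, coeffSignal_im_eq_zero_and_re_nonneg hq_nonneg,
    fun ω => ?_, fun h => ?_⟩
  · rw [sum_coeffSignal_mul_exp hp]
    simp only [p, map_mul, map_pow, map_add, aeval_X, aeval_C, coe_algebraMap, ofReal_ofNat,
      ofReal_one, one_mul]
  · rw [sum_coeffSignal_mul_exp hq]
    simp only [q, map_mul, map_pow, map_add, map_one, aeval_X, aeval_C, coe_algebraMap, ofReal_ofNat]
    ring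
  · have hz : ‖exp (-I * ω)‖ = 1 := by simp [norm_exp]
    rw [sum_coeffSignal_mul_exp hp, sum_coeffSignal_mul_exp hq]
    simp only [p, q, map_mul, map_pow, map_add, map_one, aeval_X, aeval_C, coe_algebraMap,
      ofReal_ofNat, norm_mul, norm_pow, norm_add_eq_norm_conj_mul_add_one hz 2, conj_ofNat]
  · have h0 := congrFun h 0
    simp [p, q, coeff_zero_eq_eval_zero] at h0
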